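/- Let d be a positive integer and let P ⊂ ℝ^d be a rational polytope of dimension d. Then for every rational c with 1 ≤ c ≤ (d+1)/d one has cP = ⋃ (x + P), where the union is over all vertices v of P and all x ∈ (c−1)P ∩ ((c−1)v + ℤ^d). -/

import Mathlib

open Set Metric Pointwise

noncomputable section

/-- Points of the Euclidean space `ℝ^d`. -/
abbrev Pt (d : ℕ) : Type := EuclideanSpace ℝ (Fin d)

/-- `x` is a point of the standard lattice `ℤ^d ⊂ ℝ^d`. -/
def IsLatticePt {d : ℕ} (x : Pt d) : Prop := ∀ i, ∃ n : ℤ, x i = (n : ℝ)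

/-- `x` has rational coordinates. -/
def IsRatPt {d : ℕ} (x : Pt d) : Prop := ∀ i, ∃ q : ℚ, x i = (q : ℝ)

/-- `P` is a polytope with rational vertices. -/
def IsRationalPolytope {d : ℕ} (P : Set (Pt d)) : Prop :=
  ∃ V : Finset (Pt d), (∀ v ∈ V, IsRatPt v) ∧ P = convexHull ℝ (V : Set (Pt d))

/-- `P` is a polytope with integral vertices. -/
def IsLatticePolytope {d : ℕ} (P : Set (Pt d)) : Prop :=
  ∃ V : Finset (Pt d), (∀ v ∈ V, IsLatticePt v) ∧ P = convexHull ℝ (V : Set (Pt d))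

/-- The (affine) dimension of a set. -/
def polyDim {d : ℕ} (P : Set (Pt d)) : ℕ := Module.finrank ℝ (vectorSpan ℝ P)

/-- An integer vector is primitive if its components are coprime. -/
def IsPrimitive {d : ℕ} (u : Fin d → ℤ) : Prop := Finset.univ.gcd u = 1

/-- The segment `[v, w]` has lattice length at least `lb`: whenever `w - v = t • u` with
`u` a primitive integer vector and `t > 0`, one has `t ≥ lb`. -/
def LatLenGE {d : ℕ} (v w : Pt d) (lb : ℝ) : Prop :=
  ∀ (u : Fin d → ℤ) (t : ℝ), 0 < t → IsPrimitive u →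
    (∀ i, w i - v i = t * (u i : ℝ)) → lb ≤ t

/-- The segment `[v, w]` has lattice length greater than `lb`. -/
def LatLenGT {d : ℕ} (v w : Pt d) (lb : ℝ) : Prop :=
  ∀ (u : Fin d → ℤ) (t : ℝ), 0 < t → IsPrimitive u →
    (∀ i, w i - v i = t * (u i : ℝ)) → lb < t

/-- `[v, w]` is an edge (a one-dimensional face) of `P`. -/
def IsEdge {d : ℕ} (P : Set (Pt d)) (v w : Pt d) : Prop :=
  v ≠ w ∧ IsExtreme ℝ P (segment ℝ v w)

/-- Every edge of `P` has lattice length at least `lb`. -/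
def EdgeLengthsGE {d : ℕ} (P : Set (Pt d)) (lb : ℝ) : Prop :=
  ∀ v w, IsEdge P v w → LatLenGE v w lb

/-- Every edge of `P` has lattice length greater than `lb`. -/
def EdgeLengthsGT {d : ℕ} (P : Set (Pt d)) (lb : ℝ) : Prop :=
  ∀ v w, IsEdge P v w → LatLenGT v w lb

/-- The union `⋃ (x + P)` over all vertices `v` of `P` and all
`x ∈ (c-1)P ∩ ((c-1)v + ℤ^d)`. -/
def cnUnion {d : ℕ} (P : Set (Pt d)) (c : ℝ) : Set (Pt d) :=
  {y | ∃ v ∈ Set.extremePoints ℝ P, ∃ x ∈ (c - 1) • P,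
    IsLatticePt (x - (c - 1) • v) ∧ ∃ p ∈ P, y = x + p}

/-- `P` is `k`-convex-normal: `CN(d,k)`. -/
def ConvexNormal {d : ℕ} (k : ℚ) (P : Set (Pt d)) : Prop :=
  ∀ c : ℚ, 2 ≤ c → c ≤ k → (c : ℝ) • P = cnUnion P (c : ℝ)

/-- `P` is integrally closed. -/
def IntegrallyClosed {d : ℕ} (P : Set (Pt d)) : Prop :=
  ∀ c : ℕ, 0 < c → ∀ z ∈ (c : ℝ) • P, IsLatticePt z →
    ∃ x : Fin c → Pt d, (∀ i, x i ∈ P ∧ IsLatticePt (x i)) ∧ ∑ i, x i = z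

/-- A face of a polytope: a closed convex extreme subset. -/
def IsFaceOf {d : ℕ} (P F : Set (Pt d)) : Prop :=
  IsExtreme ℝ P F ∧ Convex ℝ F ∧ IsClosed F

/-- A facet: a face of codimension one. -/
def IsFacetOf {d : ℕ} (P F : Set (Pt d)) : Prop :=
  IsFaceOf P F ∧ polyDim F + 1 = polyDim P

/-- `width_F(P)`: the maximum over vertices `v` of `P` of `dist(v, aff F)`. -/
def facetWidth {d : ℕ} (P F : Set (Pt d)) : ℝ :=
  sSup ((fun v => infDist v ((affineSpan ℝ F : AffineSubspace ℝ (Pt d)) : Set (Pt d))) ''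
    Set.extremePoints ℝ P)

/-- `U_P(F, ε)`: the `ε`-layer of `P` along (the affine hull of) `F`. -/
def layer {d : ℕ} (P F : Set (Pt d)) (ε : ℝ) : Set (Pt d) :=
  {x ∈ P | infDist x ((affineSpan ℝ F : AffineSubspace ℝ (Pt d)) : Set (Pt d)) ≤ ε}

/-- `P` is `k`-boundary-convex-normal: `BCN(d,k)`. -/
def BCN {d : ℕ} (k : ℚ) (P : Set (Pt d)) : Prop :=
  ∀ F, IsFacetOf P F → ∀ c : ℚ, 2 ≤ c → c ≤ k →
    layer ((c : ℝ) • P) ((c : ℝ) • F) (facetWidth P F / ((d : ℝ) + 1)) ⊆ cnUnion P (c : ℝ)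

/-- The parallelepiped `z + {Σ λᵢ • wᵢ : 0 ≤ λᵢ ≤ 1}`. -/
def Parallelepiped {d m : ℕ} (z : Pt d) (w : Fin m → Pt d) : Set (Pt d) :=
  {x | ∃ lam : Fin m → ℝ, (∀ i, lam i ∈ Icc (0 : ℝ) 1) ∧ x = z + ∑ i, lam i • w i}

/-- `L` is a full-dimensional lattice parallelepiped. -/
def IsLatticeParallelepiped {d : ℕ} (L : Set (Pt d)) : Prop :=
  ∃ (z : Pt d) (w : Fin d → Pt d), IsLatticePt z ∧ (∀ i, IsLatticePt (w i)) ∧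
    LinearIndependent ℝ w ∧ L = Parallelepiped z w

/-
By Carathéodory, a point `p` of a polytope in `ℝ^d` is a convex combination of at most `d + 1`
vertices, so some vertex `v` carries weight at least `1 / (d + 1)`. Hence the ray from `v`
through `p` stays in `P` up to the parameter `(d + 1) / d`, i.e. `c • p - (c - 1) • v ∈ P`, and
`c • p = (c - 1) • v + (c • p - (c - 1) • v)` exhibits `c • p` in the union with the lattice
condition trivially met by `x = (c - 1) • v`. Conversely `(c - 1) • P + P = c • P` by convexity.
-/

open AffineMap in
theorem exists_lineMap_mem_convexHull {E : Type*} [AddCommGroup E] [Module ℝ E]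
    [FiniteDimensional ℝ E] {s : Set E} {p : E} (hp : p ∈ convexHull ℝ s) :
    ∃ v ∈ s, ∀ t : ℝ, 0 ≤ t → t * Module.finrank ℝ E ≤ Module.finrank ℝ E + 1 →
      lineMap v p t ∈ convexHull ℝ s := by
  classical
  obtain ⟨ι, _, z, w, hzs, hz, hw0, hw1, rfl⟩ := eq_pos_convex_span_of_mem_convexHull hp
  have hcard : (Fintype.card ι : ℝ) ≤ Module.finrank ℝ E + 1 := by
    exact_mod_cast hz.card_le_finrank_succ.trans
      (Nat.add_le_add_right (Submodule.finrank_le _) 1)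
  set n : ℝ := (Module.finrank ℝ E : ℝ)
  have hne : (Finset.univ : Finset ι).Nonempty := by
    by_contra h
    simp_all [Finset.not_nonempty_iff_eq_empty]
  -- Pigeonhole: some vertex carries weight at least `1 / (n + 1)`.
  obtain ⟨i₀, -, hi₀⟩ : ∃ i ∈ Finset.univ, (1 : ℝ) ≤ Fintype.card ι * w i :=
    Finset.exists_le_of_sum_le hne (by simp [← Finset.mul_sum, hw1])
  refine ⟨z i₀, hzs ⟨i₀, rfl⟩, fun t ht htn => ?_⟩
  set μ : ι → ℝ := fun i => t * w i + if i = i₀ then 1 - t else 0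
  have hμ0 : ∀ i, 0 ≤ μ i := by
    intro i
    by_cases h : i = i₀
    · subst h
      simp only [μ, if_true]
      have hn : 0 ≤ n := Nat.cast_nonneg _
      have h1 : t ≤ t * ((n + 1) * w i) := by
        nlinarith [mul_le_mul_of_nonneg_right hcard (hw0 i).le]
      nlinarith
    · simpa [μ, h] using mul_nonneg ht (hw0 i).le
  have hμ1 : ∑ i, μ i = 1 := by simp [μ, Finset.sum_add_distrib, ← Finset.mul_sum, hw1]
  have hcomb : ∑ i, μ i • z i = lineMap (z i₀) (∑ i, w i • z i) t := by
    simp [μ, add_smul, Finset.sum_add_distrib, ← Finset.smul_sum, mul_smul,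
      lineMap_apply_module, add_comm]
  rw [← hcomb]
  exact (convex_convexHull ℝ s).sum_mem (fun i _ => hμ0 i) (by simpa using hμ1)
    (fun i _ => subset_convexHull ℝ s (hzs ⟨i, rfl⟩))

theorem Set.Finite.convexHull_extremePoints_convexHull {E : Type*} [NormedAddCommGroup E]
    [NormedSpace ℝ E] {V : Set E} (hV : V.Finite) :
    convexHull ℝ ((convexHull ℝ V).extremePoints ℝ) = convexHull ℝ V := by
  have hfin : ((convexHull ℝ V).extremePoints ℝ).Finite :=
    hV.subset extremePoints_convexHull_subset
  rw [← (hfin.isCompact_convexHull (𝕜 := ℝ)).isClosed.closure_eq]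
  exact closure_convexHull_extremePoints (hV.isCompact_convexHull (𝕜 := ℝ))
    (convex_convexHull ℝ V)

theorem IsLatticePt.zero {d : ℕ} : IsLatticePt (0 : Pt d) := fun _ => ⟨0, by simp⟩

theorem cnUnion_subset_smul {d : ℕ} {P : Set (Pt d)} (hP : Convex ℝ P) {c : ℝ} (hc : 1 ≤ c) :
    cnUnion P c ⊆ c • P := by
  rintro _ ⟨-, -, x, hx, -, p, hp, rfl⟩
  rw [show c = (c - 1) + 1 by ring, hP.add_smul (by linarith) zero_le_one, one_smul]
  exact add_mem_add hx hp

theorem smul_subset_cnUnion {d : ℕ} {P : Set (Pt d)}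
    (hP : convexHull ℝ (P.extremePoints ℝ) = P) {c : ℝ} (hc : 0 ≤ c) (hcd : c * d ≤ d + 1) :
    c • P ⊆ cnUnion P c := by
  rintro _ ⟨p, hp, rfl⟩
  rw [← hP] at hp
  obtain ⟨v, hv, hline⟩ := exists_lineMap_mem_convexHull hp
  have hvP : v ∈ P := extremePoints_subset hv
  refine ⟨v, hv, (c - 1) • v, smul_mem_smul_set hvP, by simpa using IsLatticePt.zero,
    AffineMap.lineMap v p c, hP ▸ hline c hc (by simpa using hcd), ?_⟩
  rw [AffineMap.lineMap_apply_module]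
  module

theorem statement6_general (d : ℕ)
    (P : Set (Pt d)) (hP : IsRationalPolytope P)
    (c : ℚ) (hc1 : 1 ≤ c) (hc2 : c ≤ ((d : ℚ) + 1) / (d : ℚ)) :
    (c : ℝ) • P = cnUnion P (c : ℝ) := by
  obtain ⟨V, -, rfl⟩ := hP
  have hcd : (c : ℝ) * d ≤ d + 1 := by
    exact_mod_cast mul_le_of_le_div₀ (by positivity) (by positivity) hc2
  have hc1' : (1 : ℝ) ≤ c := by exact_mod_cast hc1
  exact (smul_subset_cnUnion V.finite_toSet.convexHull_extremePoints_convexHull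
    (by linarith) hcd).antisymm (cnUnion_subset_smul (convex_convexHull ℝ _) hc1')

/-- Lemma 2.4(c). For any rational `d`-polytope `P` and any rational `c` with
`1 ≤ c ≤ (d+1)/d`, the convex-normality equality holds. -/
theorem statement6 (d : ℕ) (hd : 0 < d)
    (P : Set (Pt d)) (hP : IsRationalPolytope P) (hdim : polyDim P = d)
    (c : ℚ) (hc1 : 1 ≤ c) (hc2 : c ≤ ((d : ℚ) + 1) / (d : ℚ)) :
    (c : ℝ) • P = cnUnion P (c : ℝ) :=
  statement6_general d P hP c hc1 hc2
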